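/- arXiv:2002.05330 — 3 statements merged into one kernel-verified Lean document; each statement's English description precedes it below -/
import Mathlib

section
/- Let n ≥ 1, let V₁, …, Vₙ : (Fin n → ℝ) → ℝ satisfy 0 ≤ Vₖ(x) ≤ 1 for all x and all k, and let ε₁, …, εₙ be reals with εₖ ≥ 1 for all k. Suppose b : ℝ → (Fin n → ℝ) is differentiable on [0, ∞) and satisfies bₖ'(t) = Vₖ(b(t)) − εₖ·bₖ(t) for all t ≥ 0 and all k. If b(0) ∈ [0,1]ⁿ, then b(t) ∈ [0,1]ⁿ for all t ≥ 0 (the n-dimensional unit cube is forward invariant for the multi-sided platform model). -/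
/-!
Each coordinate solves a scalar linear equation `y' = f - c y` with a forcing term `f`.
Multiplying by the integrating factor `exp (c t)` turns it into `(exp (c t) y)' = exp (c t) f`,
so `y` stays nonnegative when `f` is. Applied to `1 - bₖ`, whose forcing term is `εₖ - Vₖ(b) ≥ 0`,
the same argument gives `bₖ ≤ 1`.
-/

theorem nonneg_of_hasDerivAt_sub_mul {c : ℝ} {y f : ℝ → ℝ}
    (hy : ∀ t, 0 ≤ t → HasDerivAt y (f t - c * y t) t) (hf : ∀ t, 0 ≤ t → 0 ≤ f t)
    (h0 : 0 ≤ y 0) {t : ℝ} (ht : 0 ≤ t) : 0 ≤ y t := by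
  have hderiv : ∀ s, 0 ≤ s →
      HasDerivAt (fun u => Real.exp (c * u) * y u) (Real.exp (c * s) * f s) s := by
    intro s hs
    have hexp : HasDerivAt (fun u => Real.exp (c * u)) (Real.exp (c * s) * c) s := by
      simpa using ((hasDerivAt_id s).const_mul c).exp
    exact (hexp.mul (hy s hs)).congr_deriv (by ring)
  have hmono : MonotoneOn (fun u => Real.exp (c * u) * y u) (Set.Ici 0) := by
    refine monotoneOn_of_hasDerivWithinAt_nonneg (convex_Ici 0)
      (fun s hs => (hderiv s hs).continuousAt.continuousWithinAt)
      (fun s hs => (hderiv s (interior_subset hs)).hasDerivWithinAt) fun s hs => ?_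
    exact mul_nonneg (Real.exp_pos _).le (hf s (interior_subset hs))
  have key := hmono Set.self_mem_Ici ht ht
  simp only [mul_zero, Real.exp_zero, one_mul] at key
  exact nonneg_of_mul_nonneg_right (h0.trans key) (Real.exp_pos _)

theorem le_of_hasDerivAt_sub_mul {c M : ℝ} {y f : ℝ → ℝ}
    (hy : ∀ t, 0 ≤ t → HasDerivAt y (f t - c * y t) t) (hf : ∀ t, 0 ≤ t → f t ≤ c * M)
    (h0 : y 0 ≤ M) {t : ℝ} (ht : 0 ≤ t) : y t ≤ M := by
  have hgap : ∀ s, 0 ≤ s →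
      HasDerivAt (fun u => M - y u) ((c * M - f s) - c * (M - y s)) s := by
    intro s hs
    exact ((hy s hs).const_sub M).congr_deriv (by ring)
  exact sub_nonneg.1 <| nonneg_of_hasDerivAt_sub_mul hgap
    (fun s hs => sub_nonneg.2 (hf s hs)) (sub_nonneg.2 h0) ht

theorem unit_cube_forward_invariant_general
    (n : ℕ)
    (V : Fin n → (Fin n → ℝ) → ℝ)
    (hV : ∀ k x, V k x ∈ Set.Icc (0 : ℝ) 1)
    (ε : Fin n → ℝ) (hε : ∀ k, 1 ≤ ε k)
    (b : ℝ → (Fin n → ℝ))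
    (hb : ∀ t, 0 ≤ t → ∀ k, HasDerivAt (fun s => b s k) (V k (b t) - ε k * b t k) t)
    (hb0 : ∀ k, b 0 k ∈ Set.Icc (0 : ℝ) 1) :
    ∀ t, 0 ≤ t → ∀ k, b t k ∈ Set.Icc (0 : ℝ) 1 := by
  intro t ht k
  have hb_k : ∀ s, 0 ≤ s → HasDerivAt (fun u => b u k) (V k (b s) - ε k * b s k) s :=
    fun s hs => hb s hs k
  refine ⟨nonneg_of_hasDerivAt_sub_mul hb_k (fun s _ => (hV k (b s)).1) (hb0 k).1 ht,
    le_of_hasDerivAt_sub_mul hb_k (fun s _ => ?_) (hb0 k).2 ht⟩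
  rw [mul_one]
  exact (hV k (b s)).2.trans (hε k)

/-- The `n`-dimensional unit cube is forward invariant for the
multi-sided platform model `bₖ' = Vₖ(b) − εₖ·bₖ` with attachment functions `Vₖ`
taking values in `[0,1]` and `εₖ ≥ 1`. -/
theorem unit_cube_forward_invariant
    (n : ℕ) (hn : 1 ≤ n)
    (V : Fin n → (Fin n → ℝ) → ℝ)
    (hV : ∀ k x, V k x ∈ Set.Icc (0 : ℝ) 1)
    (ε : Fin n → ℝ) (hε : ∀ k, 1 ≤ ε k)
    (b : ℝ → (Fin n → ℝ))
    (hb : ∀ t, 0 ≤ t → ∀ k, HasDerivAt (fun s => b s k) (V k (b t) - ε k * b t k) t)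
    (hb0 : ∀ k, b 0 k ∈ Set.Icc (0 : ℝ) 1) :
    ∀ t, 0 ≤ t → ∀ k, b t k ∈ Set.Icc (0 : ℝ) 1 :=
  unit_cube_forward_invariant_general n V hV ε hε b hb hb0
end

section
/- Let V, W : ℝ → ℝ be continuous with V(x) ≥ 0 and W(x) ≥ 0 for all x. Suppose b, g : ℝ → ℝ are differentiable on [0, ∞), satisfy b'(t) = V(g(t)) and g'(t) = W(b(t)) for all t ≥ 0, and (b(t), g(t)) ∈ [0,1]² for all t ≥ 0. Then there exist b∞, g∞ ∈ [0,1] such that b(t) → b∞ and g(t) → g∞ as t → ∞, and (b∞, g∞) is a stationary point of the system: V(g∞) = 0 and W(b∞) = 0. Thus every trajectory that remains in the unit square converges (from the left and below) to a stationary point. -/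
/-!
Both coordinates have nonnegative derivatives, so they are nondecreasing, and being bounded by `1`
they converge, to limits in the closed square. Their derivatives `V (g t)` and `W (b t)` then
converge too, by continuity, to `V g∞` and `W b∞`. By the mean value theorem,
`f (t + 1) - f t = f' ξₜ` with `ξₜ ≥ t`: if `f` converges and `f'` has a limit, that limit is `0`.
-/

open Filter Topology Set

lemma monotoneOn_Ici_of_hasDerivAt_nonneg {f f' : ℝ → ℝ} {a : ℝ}
    (hf : ∀ t ∈ Ici a, HasDerivAt f (f' t) t) (hf' : ∀ t ∈ Ici a, 0 ≤ f' t) :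
    MonotoneOn f (Ici a) :=
  monotoneOn_of_hasDerivWithinAt_nonneg (convex_Ici a)
    (fun t ht => (hf t ht).continuousAt.continuousWithinAt)
    (fun t ht => (hf t (interior_subset ht)).hasDerivWithinAt)
    (fun t ht => hf' t (interior_subset ht))

lemma MonotoneOn.exists_tendsto_atTop_of_bddAbove {α β : Type*} [LinearOrder α]
    [ConditionallyCompletePartialOrderSup β] [TopologicalSpace β] [SupConvergenceClass β]
    {f : α → β} {a : α} (hf : MonotoneOn f (Ici a)) (hbdd : BddAbove (f '' Ici a)) :
    ∃ l, Tendsto f atTop (𝓝 l) := by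
  have hmono : Monotone fun t => f (max a t) := fun s t hst =>
    hf (le_max_left a s) (le_max_left a t) (max_le_max le_rfl hst)
  have hbdd' : BddAbove (range fun t => f (max a t)) :=
    hbdd.mono (range_subset_iff.2 fun t => mem_image_of_mem f (le_max_left a t))
  refine ⟨_, (tendsto_atTop_ciSup hmono hbdd').congr' ?_⟩
  filter_upwards [eventually_ge_atTop a] with t ht
  rw [max_eq_right ht]

lemma eq_zero_of_tendsto_of_tendsto_deriv {f f' : ℝ → ℝ} {l L : ℝ}
    (hf : ∀ᶠ t in atTop, HasDerivAt f (f' t) t) (hl : Tendsto f atTop (𝓝 l))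
    (hL : Tendsto f' atTop (𝓝 L)) : L = 0 := by
  obtain ⟨a, ha⟩ := eventually_atTop.1 hf
  have hmvt : ∀ t, ∃ ξ, t ≤ ξ ∧ (a ≤ t → f' ξ = f (t + 1) - f t) := by
    intro t
    by_cases ht : a ≤ t
    · obtain ⟨ξ, hξ, hslope⟩ := exists_hasDerivAt_eq_slope f f' (lt_add_one t)
        (fun x hx => (ha x (ht.trans hx.1)).continuousAt.continuousWithinAt)
        (fun x hx => ha x (ht.trans hx.1.le))
      exact ⟨ξ, hξ.1.le, fun _ => by simpa using hslope⟩
    · exact ⟨t, le_rfl, fun h => absurd h ht⟩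
  choose ξ hξ_ge hξ using hmvt
  have h_deriv : Tendsto (fun t => f' (ξ t)) atTop (𝓝 L) :=
    hL.comp (tendsto_atTop_mono hξ_ge tendsto_id)
  have h_incr : Tendsto (fun t => f (t + 1) - f t) atTop (𝓝 0) := by
    simpa using (hl.comp (tendsto_atTop_add_const_right _ 1 tendsto_id)).sub hl
  exact tendsto_nhds_unique (h_deriv.congr' (eventually_atTop.2 ⟨a, hξ⟩)) h_incr

/-- For the two-sided platform model without same-side network effect,
`b' = V(g)`, `g' = W(b)` with `V, W` continuous and nonnegative, every trajectory
that remains in the unit square converges to a stationary point `(b∞, g∞)`, i.e.,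
`V(g∞) = 0` and `W(b∞) = 0`. -/
theorem bounded_trajectory_converges_to_stationary
    (V W : ℝ → ℝ) (hVc : Continuous V) (hWc : Continuous W)
    (hV : ∀ x, 0 ≤ V x) (hW : ∀ x, 0 ≤ W x)
    (b g : ℝ → ℝ)
    (hb : ∀ t, 0 ≤ t → HasDerivAt b (V (g t)) t)
    (hg : ∀ t, 0 ≤ t → HasDerivAt g (W (b t)) t)
    (hsquare : ∀ t, 0 ≤ t → b t ∈ Set.Icc (0 : ℝ) 1 ∧ g t ∈ Set.Icc (0 : ℝ) 1) :
    ∃ binf ginf : ℝ, binf ∈ Set.Icc (0 : ℝ) 1 ∧ ginf ∈ Set.Icc (0 : ℝ) 1 ∧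
      Tendsto b atTop (𝓝 binf) ∧ Tendsto g atTop (𝓝 ginf) ∧
      V ginf = 0 ∧ W binf = 0 := by
  have hb_bdd : BddAbove (b '' Ici 0) := ⟨1, by rintro _ ⟨t, ht, rfl⟩; exact (hsquare t ht).1.2⟩
  have hg_bdd : BddAbove (g '' Ici 0) := ⟨1, by rintro _ ⟨t, ht, rfl⟩; exact (hsquare t ht).2.2⟩
  obtain ⟨binf, hb_lim⟩ := (monotoneOn_Ici_of_hasDerivAt_nonneg hb fun _ _ => hV _)
    |>.exists_tendsto_atTop_of_bddAbove hb_bdd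
  obtain ⟨ginf, hg_lim⟩ := (monotoneOn_Ici_of_hasDerivAt_nonneg hg fun _ _ => hW _)
    |>.exists_tendsto_atTop_of_bddAbove hg_bdd
  have hb_sq : ∀ᶠ t in atTop, b t ∈ Icc (0 : ℝ) 1 :=
    eventually_atTop.2 ⟨0, fun t ht => (hsquare t ht).1⟩
  have hg_sq : ∀ᶠ t in atTop, g t ∈ Icc (0 : ℝ) 1 :=
    eventually_atTop.2 ⟨0, fun t ht => (hsquare t ht).2⟩
  refine ⟨binf, ginf, isClosed_Icc.mem_of_tendsto hb_lim hb_sq,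
    isClosed_Icc.mem_of_tendsto hg_lim hg_sq, hb_lim, hg_lim, ?_, ?_⟩
  · exact eq_zero_of_tendsto_of_tendsto_deriv (eventually_atTop.2 ⟨0, hb⟩) hb_lim
      ((hVc.tendsto ginf).comp hg_lim)
  · exact eq_zero_of_tendsto_of_tendsto_deriv (eventually_atTop.2 ⟨0, hg⟩) hg_lim
      ((hWc.tendsto binf).comp hb_lim)
end

section
/- Let V, W : ℝ → ℝ be continuous with V(x) ≥ 0 and W(x) ≥ 0 for all x, and additionally V(x) > 0 and W(x) > 0 for all x ∈ (0,1]. Suppose b, g : ℝ → ℝ are differentiable on [0, ∞) and satisfy b'(t) = V(g(t)) and g'(t) = W(b(t)) for all t ≥ 0, with b(0) ∈ (0,1] and g(0) ∈ (0,1]. Then it is not the case that (b(t), g(t)) ∈ [0,1]² for all t ≥ 0: the trajectory escapes the unit square in finite time. -/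
/-!
Since `g' = W(b) ≥ 0`, the side `g` never drops below `g 0 > 0`; while the trajectory stays in
the square, `g` is therefore trapped in `[g 0, 1]`, where `V` has a positive minimum `c`. Then
`b' = V(g) ≥ c`, so `b` grows at least linearly and exceeds `1` by time `2 / c`.
-/

open Set

theorem mul_sub_le_sub_of_hasDerivAt_Ici {f f' : ℝ → ℝ} {a C : ℝ}
    (hf : ∀ t, a ≤ t → HasDerivAt f (f' t) t) (hC : ∀ t, a ≤ t → C ≤ f' t)
    {x y : ℝ} (hx : a ≤ x) (hxy : x ≤ y) : C * (y - x) ≤ f y - f x := by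
  refine (convex_Ici a).mul_sub_le_image_sub_of_le_deriv
    (fun t ht => (hf t ht).continuousAt.continuousWithinAt)
    (fun t ht => (hf t (interior_subset ht)).differentiableAt.differentiableWithinAt)
    (fun t ht => ?_) x hx y (hx.trans hxy) hxy
  rw [(hf t (interior_subset ht)).deriv]
  exact hC t (interior_subset ht)

theorem trajectory_escapes_unit_square_general
    (V W : ℝ → ℝ) (hVc : Continuous V)
    (hW : ∀ x, 0 ≤ W x)
    (hVpos : ∀ x, x ∈ Set.Ioc (0 : ℝ) 1 → 0 < V x)
    (b g : ℝ → ℝ)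
    (hb : ∀ t, 0 ≤ t → HasDerivAt b (V (g t)) t)
    (hg : ∀ t, 0 ≤ t → HasDerivAt g (W (b t)) t)
    (hg0 : g 0 ∈ Set.Ioc (0 : ℝ) 1) :
    ¬ (∀ t, 0 ≤ t → b t ∈ Set.Icc (0 : ℝ) 1 ∧ g t ∈ Set.Icc (0 : ℝ) 1) := by
  intro hsq
  have hg_mem : ∀ t, 0 ≤ t → g t ∈ Icc (g 0) 1 := fun t ht =>
    ⟨by linarith [mul_sub_le_sub_of_hasDerivAt_Ici hg (fun s _ => hW (b s)) le_rfl ht],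
      (hsq t ht).2.2⟩
  obtain ⟨c, hc, hcV⟩ := isCompact_Icc.exists_forall_le' hVc.continuousOn
    fun x hx => hVpos x ⟨hg0.1.trans_le hx.1, hx.2⟩
  have hT : 0 ≤ 2 / c := by positivity
  have hgrowth := mul_sub_le_sub_of_hasDerivAt_Ici hb
    (fun t ht => hcV (g t) (hg_mem t ht)) le_rfl hT
  rw [sub_zero, mul_div_cancel₀ _ hc.ne'] at hgrowth
  linarith [(hsq 0 le_rfl).1.1, (hsq _ hT).1.2]

/-- For the two-sided platform model without same-side network effect,
`b' = V(g)`, `g' = W(b)`, with `V, W` continuous, nonnegative, and strictly positive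
on `(0,1]`, a trajectory starting with positive volume on each side cannot remain in
the unit square: it escapes in finite time. -/
theorem trajectory_escapes_unit_square
    (V W : ℝ → ℝ) (hVc : Continuous V) (hWc : Continuous W)
    (hV : ∀ x, 0 ≤ V x) (hW : ∀ x, 0 ≤ W x)
    (hVpos : ∀ x, x ∈ Set.Ioc (0 : ℝ) 1 → 0 < V x)
    (hWpos : ∀ x, x ∈ Set.Ioc (0 : ℝ) 1 → 0 < W x)
    (b g : ℝ → ℝ)
    (hb : ∀ t, 0 ≤ t → HasDerivAt b (V (g t)) t)
    (hg : ∀ t, 0 ≤ t → HasDerivAt g (W (b t)) t)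
    (hb0 : b 0 ∈ Set.Ioc (0 : ℝ) 1) (hg0 : g 0 ∈ Set.Ioc (0 : ℝ) 1) :
    ¬ (∀ t, 0 ≤ t → b t ∈ Set.Icc (0 : ℝ) 1 ∧ g t ∈ Set.Icc (0 : ℝ) 1) :=
  trajectory_escapes_unit_square_general V W hVc hW hVpos b g hb hg hg0
end
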